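/- arXiv:1705.10904 — 5 statements merged into one kernel-verified Lean document; each statement's English description precedes it below -/
import Mathlib

section
/- Let α be a finite type and let p, q be pmfs on α. For every function D : α → ℝ with 0 < D x < 1 for all x, V(p,q,D) ≤ V(p,q,D*), where D*(x) = p x / (p x + q x) at points with p x + q x > 0 (and the value of D* at points with p x = q x = 0 is irrelevant since such points contribute 0 to V). Moreover equality holds if and only if D x = p x / (p x + q x) for every x with p x + q x > 0. -/
/-!
Pointwise, with `a = p x`, `b = q x`, the map `t ↦ a * log t + b * log (1 - t)` is maximised
on `(0, 1)` exactly at `t* = a / (a + b)`: bounding `a * log (t / t*)` and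
`b * log ((1 - t) / (1 - t*))` by `log y ≤ y - 1`, the two linear error terms cancel, and the
bound is strict unless `t = t*`, since `log y = y - 1` only at `y = 1`.
-/

open Finset

/-- The GAN objective `V(p,q,D) = Σ_x p x * log (D x) + Σ_x q x * log (1 - D x)`,
where a summand is taken to be `0` when its pmf coefficient is `0`. -/
noncomputable def ganV {α : Type*} [Fintype α] (p q D : α → ℝ) : ℝ :=
  (∑ x, if p x = 0 then 0 else p x * Real.log (D x)) +
  (∑ x, if q x = 0 then 0 else q x * Real.log (1 - D x))

open Real

lemma ganV_eq_sum {α : Type*} [Fintype α] (p q D : α → ℝ) :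
    ganV p q D = ∑ x, (p x * log (D x) + q x * log (1 - D x)) := by
  have drop_ite (a c : ℝ) : (if a = 0 then 0 else a * c) = a * c := by
    split_ifs with h <;> simp [h]
  simp only [ganV, drop_ite, sum_add_distrib]

lemma mul_log_sub_mul_log_div_lt {a c t : ℝ} (ha : 0 ≤ a) (hc : 0 < c) (ht : 0 < t)
    (hne : t ≠ a / c) : a * log t - a * log (a / c) < c * t - a := by
  rcases ha.eq_or_lt with rfl | ha
  · simpa using mul_pos hc ht
  have hy : t / (a / c) ≠ 1 := fun h => hne ((div_eq_one_iff_eq (by positivity)).mp h)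
  calc a * log t - a * log (a / c) = a * log (t / (a / c)) := by
        rw [log_div ht.ne' (by positivity), mul_sub]
    _ < a * (t / (a / c) - 1) :=
        mul_lt_mul_of_pos_left (log_lt_sub_one_of_pos (by positivity) hy) ha
    _ = c * t - a := by field_simp

lemma mul_log_sub_mul_log_div_le {a c t : ℝ} (ha : 0 ≤ a) (hc : 0 < c) (ht : 0 < t) :
    a * log t - a * log (a / c) ≤ c * t - a := by
  rcases eq_or_ne t (a / c) with rfl | hne
  · field_simp; simp
  · exact (mul_log_sub_mul_log_div_lt ha hc ht hne).le

lemma mul_log_add_mul_log_one_sub_lt {a b t : ℝ} (ha : 0 ≤ a) (hb : 0 ≤ b) (hab : 0 < a + b)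
    (ht0 : 0 < t) (ht1 : t < 1) (hne : t ≠ a / (a + b)) :
    a * log t + b * log (1 - t) < a * log (a / (a + b)) + b * log (1 - a / (a + b)) := by
  have hstar : 1 - a / (a + b) = b / (a + b) := by field_simp; ring
  have ha_lt := mul_log_sub_mul_log_div_lt ha hab ht0 hne
  have hb_le := mul_log_sub_mul_log_div_le hb hab (sub_pos.mpr ht1)
  rw [hstar]
  linarith

lemma mul_log_add_mul_log_one_sub_le {a b t : ℝ} (ha : 0 ≤ a) (hb : 0 ≤ b)
    (ht0 : 0 < t) (ht1 : t < 1) :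
    a * log t + b * log (1 - t) ≤ a * log (a / (a + b)) + b * log (1 - a / (a + b)) := by
  rcases (add_nonneg ha hb).eq_or_lt with hab | hab
  · obtain ⟨rfl, rfl⟩ : a = 0 ∧ b = 0 := ⟨by linarith, by linarith⟩
    simp
  rcases eq_or_ne t (a / (a + b)) with rfl | hne
  · rfl
  · exact (mul_log_add_mul_log_one_sub_lt ha hb hab ht0 ht1 hne).le

lemma mul_log_add_mul_log_one_sub_eq_iff {a b t : ℝ} (ha : 0 ≤ a) (hb : 0 ≤ b)
    (ht0 : 0 < t) (ht1 : t < 1) :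
    a * log t + b * log (1 - t) = a * log (a / (a + b)) + b * log (1 - a / (a + b)) ↔
      (0 < a + b → t = a / (a + b)) := by
  refine ⟨fun heq hab => by_contra fun hne =>
    (mul_log_add_mul_log_one_sub_lt ha hb hab ht0 ht1 hne).ne heq, fun h => ?_⟩
  rcases (add_nonneg ha hb).eq_or_lt with hab | hab
  · obtain ⟨rfl, rfl⟩ : a = 0 ∧ b = 0 := ⟨by linarith, by linarith⟩
    simp
  · rw [h hab]

theorem optimal_discriminator_general {α : Type*} [Fintype α] (p q : α → ℝ)
    (hp0 : ∀ x, 0 ≤ p x)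
    (hq0 : ∀ x, 0 ≤ q x)
    (D : α → ℝ) (hD : ∀ x, 0 < D x ∧ D x < 1) :
    ganV p q D ≤ ganV p q (fun x => p x / (p x + q x)) ∧
    (ganV p q D = ganV p q (fun x => p x / (p x + q x)) ↔
      ∀ x, 0 < p x + q x → D x = p x / (p x + q x)) := by
  simp only [ganV_eq_sum]
  have hle : ∀ x ∈ univ, p x * log (D x) + q x * log (1 - D x) ≤
      p x * log (p x / (p x + q x)) + q x * log (1 - p x / (p x + q x)) := fun x _ =>
    mul_log_add_mul_log_one_sub_le (hp0 x) (hq0 x) (hD x).1 (hD x).2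
  refine ⟨sum_le_sum hle, ?_⟩
  rw [sum_eq_sum_iff_of_le hle]
  exact forall_congr' fun x => by
    rw [forall_prop_of_true (mem_univ x),
      mul_log_add_mul_log_one_sub_eq_iff (hp0 x) (hq0 x) (hD x).1 (hD x).2]

/-- Corollary 1 (Proposition 1 of Goodfellow et al.), discrete form:
for fixed generator, the optimal discriminator is `D* = p / (p + q)`,
with equality iff `D` agrees with `D*` on the support of `p + q`. -/
theorem optimal_discriminator {α : Type*} [Fintype α] (p q : α → ℝ)
    (hp0 : ∀ x, 0 ≤ p x) (hp1 : ∑ x, p x = 1)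
    (hq0 : ∀ x, 0 ≤ q x) (hq1 : ∑ x, q x = 1)
    (D : α → ℝ) (hD : ∀ x, 0 < D x ∧ D x < 1) :
    ganV p q D ≤ ganV p q (fun x => p x / (p x + q x)) ∧
    (ganV p q D = ganV p q (fun x => p x / (p x + q x)) ↔
      ∀ x, 0 < p x + q x → D x = p x / (p x + q x)) :=
  optimal_discriminator_general p q hp0 hq0 D hD
end

section
/- Let α be a finite type and let p, q be pmfs on α. Then the value of the GAN objective at the optimal discriminator satisfies Σ_{x : p x + q x > 0} [ p x * log (p x / (p x + q x)) + q x * log (q x / (p x + q x)) ] = − log 4 + 2 * D_JS(p ‖ q), where summands with zero numerator are taken to be 0. -/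
open Finset

/-- Kullback–Leibler divergence `D_KL(p ‖ q) = Σ_x p x * log (p x / q x)`,
with the convention that a summand is `0` when `p x = 0`. -/
noncomputable def klDiv {α : Type*} [Fintype α] (p q : α → ℝ) : ℝ :=
  ∑ x, if p x = 0 then 0 else p x * Real.log (p x / q x)

/-- Jensen–Shannon divergence
`D_JS(p ‖ q) = (1/2) D_KL(p ‖ m) + (1/2) D_KL(q ‖ m)` with `m = (p + q)/2`. -/
noncomputable def jsDiv {α : Type*} [Fintype α] (p q : α → ℝ) : ℝ :=
  (1 / 2) * klDiv p (fun x => (p x + q x) / 2) +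
  (1 / 2) * klDiv q (fun x => (p x + q x) / 2)

/-! Rescaling the reference weights `m = (p + q)/2` to `p + q` turns each KL term
`D_KL(· ‖ m)` into `D_KL(· ‖ p + q) + log 2`, since `p` and `q` have mass one; and the
GAN value at `D*` is exactly `D_KL(p ‖ p + q) + D_KL(q ‖ p + q)`, the points with
`p x + q x = 0` contributing nothing. -/

theorem klDiv_div_const {α : Type*} [Fintype α] {p r : α → ℝ} {c : ℝ} (hc : c ≠ 0)
    (hpr : ∀ x, p x ≠ 0 → r x ≠ 0) :
    klDiv p (fun x => r x / c) = klDiv p r + (∑ x, p x) * Real.log c := by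
  rw [klDiv, klDiv, sum_mul, ← sum_add_distrib]
  refine sum_congr rfl fun x _ => ?_
  split_ifs with hp
  · simp [hp]
  · rw [show p x / (r x / c) = c * (p x / r x) by field_simp,
      Real.log_mul hc (div_ne_zero hp (hpr x hp))]
    ring

/-- The GAN objective evaluated at the optimal discriminator `D* = p/(p+q)`
equals `− log 4 + 2 * D_JS(p ‖ q)`. -/
theorem gan_value_at_optimal_discriminator {α : Type*} [Fintype α] (p q : α → ℝ)
    (hp0 : ∀ x, 0 ≤ p x) (hp1 : ∑ x, p x = 1)
    (hq0 : ∀ x, 0 ≤ q x) (hq1 : ∑ x, q x = 1) :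
    ∑ x ∈ univ.filter (fun x => 0 < p x + q x),
      ((if p x = 0 then 0 else p x * Real.log (p x / (p x + q x))) +
       (if q x = 0 then 0 else q x * Real.log (q x / (p x + q x)))) =
      -Real.log 4 + 2 * jsDiv p q := by
  have hsupp : ∀ x, p x + q x ≤ 0 → p x = 0 ∧ q x = 0 := fun x h =>
    ⟨by linarith [hp0 x, hq0 x], by linarith [hp0 x, hq0 x]⟩
  have hp_abs : ∀ x, p x ≠ 0 → p x + q x ≠ 0 := fun x hp h => hp (hsupp x h.le).1
  have hq_abs : ∀ x, q x ≠ 0 → p x + q x ≠ 0 := fun x hq h => hq (hsupp x h.le).2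
  calc _ = klDiv p (fun x => p x + q x) + klDiv q (fun x => p x + q x) := by
        rw [sum_filter_of_ne, klDiv, klDiv, sum_add_distrib]
        intro x _ hne
        by_contra hx
        obtain ⟨hp, hq⟩ := hsupp x (not_lt.1 hx)
        simp [hp, hq] at hne
    _ = _ := by
        have hlog4 : Real.log 4 = 2 * Real.log 2 := by
          rw [show (4 : ℝ) = 2 ^ 2 by norm_num, Real.log_pow, Nat.cast_ofNat]
        rw [jsDiv, klDiv_div_const two_ne_zero hp_abs, klDiv_div_const two_ne_zero hq_abs,
          hp1, hq1, hlog4]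
        ring
end

section
/- Let C and X be finite types, let p_c and q_c be pmfs on C, and for each c : C let P c and Q c be pmfs on X. If Q c = P c for every c : C, then C(G) = − log 4 + 2 * D_JS(p_c ‖ q_c). -/
/-!
When `Q = P`, every joint summand of `C(G)` at `(c, x)` is `P c x` times the summand at `c`
of the same criterion for the marginals `p_c, q_c` alone, because the log ratios
`p(c,x) / (p(c,x) + q(c,x))` no longer depend on `x`; summing out `x` leaves that criterion.
For the marginals, halving the mixture `p_c + q_c` adds `log 2` per unit of mass to each
Kullback–Leibler term; the two terms together give the offset `log 4`.
-/

open Finset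

/-- The weakly supervised GAN criterion `C(G)`: the GAN objective at the optimal
discriminator, for joint densities `p(c,x) = p_c c * P c x` and `q(c,x) = q_c c * Q c x`.
Summands with zero numerator are taken to be `0`, and only points with
`p(c,x) + q(c,x) > 0` contribute. -/
noncomputable def CG {C X : Type*} [Fintype C] [Fintype X]
    (pc qc : C → ℝ) (P Q : C → X → ℝ) : ℝ :=
  ∑ c, ∑ x,
    if 0 < pc c * P c x + qc c * Q c x then
      (if pc c * P c x = 0 then 0 else
        pc c * P c x * Real.log (pc c * P c x / (pc c * P c x + qc c * Q c x))) +
      (if qc c * Q c x = 0 then 0 else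
        qc c * Q c x * Real.log (qc c * Q c x / (pc c * P c x + qc c * Q c x)))
    else 0

noncomputable def klSummand (a m : ℝ) : ℝ :=
  if a = 0 then 0 else a * Real.log (a / m)

@[simp]
lemma klSummand_zero_left (m : ℝ) : klSummand 0 m = 0 := if_pos rfl

lemma klDiv_eq_sum_klSummand {α : Type*} [Fintype α] (p q : α → ℝ) :
    klDiv p q = ∑ x, klSummand (p x) (q x) := rfl

lemma klSummand_mul_right (a m t : ℝ) : klSummand (a * t) (m * t) = t * klSummand a m := by
  rcases eq_or_ne t 0 with rfl | ht
  · simp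
  by_cases ha : a = 0
  · simp [ha]
  rw [klSummand, klSummand, if_neg (mul_ne_zero ha ht), if_neg ha, mul_div_mul_right _ _ ht]
  ring

lemma klSummand_div_two {a m : ℝ} (h : m = 0 → a = 0) :
    klSummand a (m / 2) = klSummand a m + a * Real.log 2 := by
  by_cases ha : a = 0
  · simp [ha]
  have hm : m ≠ 0 := fun hm => ha (h hm)
  rw [klSummand, klSummand, if_neg ha, if_neg ha, div_div_eq_mul_div, mul_comm a 2,
    mul_div_assoc, Real.log_mul two_ne_zero (div_ne_zero ha hm)]
  ring

lemma ite_pos_add_klSummand {a b : ℝ} (ha : 0 ≤ a) (hb : 0 ≤ b) :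
    (if 0 < a + b then klSummand a (a + b) + klSummand b (a + b) else 0) =
      klSummand a (a + b) + klSummand b (a + b) := by
  split_ifs
  · rfl
  obtain ⟨rfl, rfl⟩ : a = 0 ∧ b = 0 := by constructor <;> linarith
  simp

lemma CG_eq_sum_klSummand {C X : Type*} [Fintype C] [Fintype X] {pc qc : C → ℝ}
    {P Q : C → X → ℝ} (hp : ∀ c x, 0 ≤ pc c * P c x) (hq : ∀ c x, 0 ≤ qc c * Q c x) :
    CG pc qc P Q = ∑ c, ∑ x,
      (klSummand (pc c * P c x) (pc c * P c x + qc c * Q c x) +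
        klSummand (qc c * Q c x) (pc c * P c x + qc c * Q c x)) :=
  sum_congr rfl fun c _ => sum_congr rfl fun x _ => ite_pos_add_klSummand (hp c x) (hq c x)

lemma CG_self_eq_sum_klSummand {C X : Type*} [Fintype C] [Fintype X] {pc qc : C → ℝ}
    {P : C → X → ℝ} (hpc : ∀ c, 0 ≤ pc c) (hqc : ∀ c, 0 ≤ qc c) (hP0 : ∀ c x, 0 ≤ P c x)
    (hP1 : ∀ c, ∑ x, P c x = 1) :
    CG pc qc P P = ∑ c,
      (klSummand (pc c) (pc c + qc c) + klSummand (qc c) (pc c + qc c)) := by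
  rw [CG_eq_sum_klSummand (fun c x => mul_nonneg (hpc c) (hP0 c x))
    (fun c x => mul_nonneg (hqc c) (hP0 c x))]
  refine sum_congr rfl fun c _ => ?_
  simp_rw [← add_mul, klSummand_mul_right, ← mul_add, ← sum_mul, hP1, one_mul]

lemma two_mul_jsDiv {α : Type*} [Fintype α] {p q : α → ℝ} (hp : ∀ x, 0 ≤ p x)
    (hq : ∀ x, 0 ≤ q x) :
    2 * jsDiv p q = ∑ x, (klSummand (p x) (p x + q x) + klSummand (q x) (p x + q x)) +
      (∑ x, p x + ∑ x, q x) * Real.log 2 := by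
  have hp0 : ∀ x, p x + q x = 0 → p x = 0 := fun x h => by linarith [hp x, hq x]
  have hq0 : ∀ x, p x + q x = 0 → q x = 0 := fun x h => by linarith [hp x, hq x]
  simp only [jsDiv, klDiv_eq_sum_klSummand, klSummand_div_two (hp0 _),
    klSummand_div_two (hq0 _), sum_add_distrib, ← sum_mul]
  ring

theorem CG_value_of_matched_conditionals_general
    {C X : Type*} [Fintype C] [Fintype X]
    (pc qc : C → ℝ)
    (hpc0 : ∀ c, 0 ≤ pc c) (hpc1 : ∑ c, pc c = 1)
    (hqc0 : ∀ c, 0 ≤ qc c) (hqc1 : ∑ c, qc c = 1)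
    (P Q : C → X → ℝ)
    (hP0 : ∀ c x, 0 ≤ P c x) (hP1 : ∀ c, ∑ x, P c x = 1)
    (hQP : ∀ c, Q c = P c) :
    CG pc qc P Q = -Real.log 4 + 2 * jsDiv pc qc := by
  obtain rfl : Q = P := funext hQP
  have hlog4 : Real.log 4 = 2 * Real.log 2 := by
    rw [show (4 : ℝ) = 2 ^ 2 by norm_num, Real.log_pow, Nat.cast_ofNat]
  rw [two_mul_jsDiv hpc0 hqc0, hpc1, hqc1, CG_self_eq_sum_klSummand hpc0 hqc0 hP0 hP1, hlog4]
  ring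

/-- Theorem 2, value part: if the generator conditionals match the data conditionals
(`Q c = P c` for every `c`), then `C(G) = − log 4 + 2 * D_JS(p_c ‖ q_c)`. -/
theorem CG_value_of_matched_conditionals
    {C X : Type*} [Fintype C] [Fintype X]
    (pc qc : C → ℝ)
    (hpc0 : ∀ c, 0 ≤ pc c) (hpc1 : ∑ c, pc c = 1)
    (hqc0 : ∀ c, 0 ≤ qc c) (hqc1 : ∑ c, qc c = 1)
    (P Q : C → X → ℝ)
    (hP0 : ∀ c x, 0 ≤ P c x) (hP1 : ∀ c, ∑ x, P c x = 1)
    (hQ0 : ∀ c x, 0 ≤ Q c x) (hQ1 : ∀ c, ∑ x, Q c x = 1)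
    (hQP : ∀ c, Q c = P c) :
    CG pc qc P Q = -Real.log 4 + 2 * jsDiv pc qc :=
  CG_value_of_matched_conditionals_general pc qc hpc0 hpc1 hqc0 hqc1 P Q hP0 hP1 hQP
end

section
/- Let C and X be finite types, let p_c and q_c be pmfs on C, and for each c : C let P c and Q c be pmfs on X. Then C(G) ≥ − log 4 + 2 * D_JS(p_c ‖ q_c). -/
/-! At the optimal discriminator the GAN objective on `C × X` equals `-log 4 + 2 D_JS(p ‖ q)` for
the joint densities `p` and `q` (Goodfellow et al.). By the log-sum inequality, the Jensen–Shannon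
divergence can only decrease when passing to the `C`-marginals, and these are `p_c` and `q_c`. -/

open Finset

open Real Function

lemma ite_mul_log_div_eq (a b : ℝ) :
    (if a = 0 then 0 else a * log (a / b)) = a * log (a / b) := by
  split_ifs with ha <;> simp [ha]

lemma klDiv_eq_sum {α : Type*} [Fintype α] (p q : α → ℝ) :
    klDiv p q = ∑ x, p x * log (p x / q x) := by
  simp only [klDiv, ite_mul_log_div_eq]

-- Jensen for the convex function `t ↦ t log t`, with weights `b i / B` at the points `a i / b i`.
theorem sum_mul_log_div_sum_le {ι : Type*} (s : Finset ι) {a b : ι → ℝ}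
    (ha : ∀ i ∈ s, 0 ≤ a i) (hb : ∀ i ∈ s, 0 ≤ b i) (hab : ∀ i ∈ s, b i = 0 → a i = 0) :
    (∑ i ∈ s, a i) * log ((∑ i ∈ s, a i) / ∑ i ∈ s, b i) ≤
      ∑ i ∈ s, a i * log (a i / b i) := by
  have hterm : ∀ i ∈ s, b i * (a i / b i * log (a i / b i)) = a i * log (a i / b i) :=
    fun i hi => by rw [← mul_assoc, mul_div_cancel_of_imp' (hab i hi)]
  rcases (sum_nonneg hb).eq_or_lt with hB | hB
  · have hb0 : ∀ i ∈ s, b i = 0 := (sum_eq_zero_iff_of_nonneg hb).mp hB.symm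
    rw [← hB, div_zero, log_zero, mul_zero]
    exact sum_nonneg fun i hi => by simp [hab i hi (hb0 i hi)]
  set B := ∑ i ∈ s, b i
  have hjensen := convexOn_mul_log.map_sum_le (t := s) (w := fun i => b i / B)
    (p := fun i => a i / b i) (fun i hi => div_nonneg (hb i hi) hB.le)
    (by rw [← sum_div, div_self hB.ne']) (fun i hi => div_nonneg (ha i hi) (hb i hi))
  have hmean : ∑ i ∈ s, b i / B * (a i / b i) = (∑ i ∈ s, a i) / B := by
    simp only [div_mul_eq_mul_div, ← sum_div]
    exact congrArg (· / B) (sum_congr rfl fun i hi => mul_div_cancel_of_imp' (hab i hi))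
  simp only [smul_eq_mul, hmean] at hjensen
  calc (∑ i ∈ s, a i) * log ((∑ i ∈ s, a i) / B)
      = B * ((∑ i ∈ s, a i) / B * log ((∑ i ∈ s, a i) / B)) := by field_simp
    _ ≤ B * ∑ i ∈ s, b i / B * (a i / b i * log (a i / b i)) := by gcongr
    _ = ∑ i ∈ s, a i * log (a i / b i) := by
      rw [mul_sum]
      refine sum_congr rfl fun i hi => ?_
      rw [← hterm i hi]
      field_simp

section Marginal

variable {C X : Type*} [Fintype C] [Fintype X]

theorem klDiv_sum_le_klDiv_uncurry {a b : C → X → ℝ} (ha : ∀ c x, 0 ≤ a c x)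
    (hb : ∀ c x, 0 ≤ b c x) (hab : ∀ c x, b c x = 0 → a c x = 0) :
    klDiv (fun c => ∑ x, a c x) (fun c => ∑ x, b c x) ≤ klDiv (uncurry a) (uncurry b) := by
  rw [klDiv_eq_sum, klDiv_eq_sum, Fintype.sum_prod_type]
  exact sum_le_sum fun c _ =>
    sum_mul_log_div_sum_le _ (fun x _ => ha c x) (fun x _ => hb c x) (fun x _ => hab c x)

theorem jsDiv_sum_le_jsDiv_uncurry {p q : C → X → ℝ} (hp : ∀ c x, 0 ≤ p c x)
    (hq : ∀ c x, 0 ≤ q c x) :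
    jsDiv (fun c => ∑ x, p c x) (fun c => ∑ x, q c x) ≤ jsDiv (uncurry p) (uncurry q) := by
  set m : C → X → ℝ := fun c x => (p c x + q c x) / 2
  have hm : ∀ c x, 0 ≤ m c x := fun c x => by have := hp c x; have := hq c x; positivity
  have hmarg : (fun c => (∑ x, p c x + ∑ x, q c x) / 2) = fun c => ∑ x, m c x :=
    funext fun c => by rw [← sum_add_distrib, sum_div]
  have hpm := klDiv_sum_le_klDiv_uncurry hp hm fun c x h => by
    simp only [m] at h; linarith [hp c x, hq c x]
  have hqm := klDiv_sum_le_klDiv_uncurry hq hm fun c x h => by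
    simp only [m] at h; linarith [hp c x, hq c x]
  unfold jsDiv
  rw [hmarg]
  gcongr
  exacts [hpm, hqm]

end Marginal

noncomputable def ganTerm (p q : ℝ) : ℝ :=
  if 0 < p + q then
    (if p = 0 then 0 else p * log (p / (p + q))) + (if q = 0 then 0 else q * log (q / (p + q)))
  else 0

lemma CG_eq_sum_ganTerm {C X : Type*} [Fintype C] [Fintype X] (pc qc : C → ℝ)
    (P Q : C → X → ℝ) :
    CG pc qc P Q = ∑ z : C × X, ganTerm (pc z.1 * P z.1 z.2) (qc z.1 * Q z.1 z.2) :=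
  (Fintype.sum_prod_type fun z : C × X => ganTerm (pc z.1 * P z.1 z.2) (qc z.1 * Q z.1 z.2)).symm

lemma mul_log_div_half (r : ℝ) {s : ℝ} (hs : s ≠ 0) :
    r * log (r / (s / 2)) = r * log (r / s) + r * log 2 := by
  rcases eq_or_ne r 0 with rfl | hr
  · simp
  rw [div_div_eq_mul_div, mul_div_right_comm, log_mul (div_ne_zero hr hs) two_ne_zero, mul_add]

lemma ganTerm_eq {p q : ℝ} (hp : 0 ≤ p) (hq : 0 ≤ q) :
    ganTerm p q = p * log (p / ((p + q) / 2)) + q * log (q / ((p + q) / 2)) - (p + q) * log 2 := by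
  rcases (add_nonneg hp hq).eq_or_lt with hpq | hpq
  · obtain ⟨rfl, rfl⟩ : p = 0 ∧ q = 0 := ⟨by linarith, by linarith⟩
    simp [ganTerm]
  rw [ganTerm, if_pos hpq, ite_mul_log_div_eq, ite_mul_log_div_eq,
    mul_log_div_half p hpq.ne', mul_log_div_half q hpq.ne']
  ring

theorem sum_ganTerm_eq_jsDiv {α : Type*} [Fintype α] {p q : α → ℝ} (hp : ∀ z, 0 ≤ p z)
    (hq : ∀ z, 0 ≤ q z) :
    ∑ z, ganTerm (p z) (q z) = 2 * jsDiv p q - (∑ z, (p z + q z)) * log 2 := by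
  simp only [ganTerm_eq (hp _) (hq _), sum_sub_distrib, sum_add_distrib, ← sum_mul]
  rw [jsDiv, klDiv_eq_sum, klDiv_eq_sum]
  ring

/-- Theorem 2, lower-bound half: the weakly supervised GAN criterion satisfies
`C(G) ≥ − log 4 + 2 * D_JS(p_c ‖ q_c)`. -/
theorem CG_lower_bound
    {C X : Type*} [Fintype C] [Fintype X]
    (pc qc : C → ℝ)
    (hpc0 : ∀ c, 0 ≤ pc c) (hpc1 : ∑ c, pc c = 1)
    (hqc0 : ∀ c, 0 ≤ qc c) (hqc1 : ∑ c, qc c = 1)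
    (P Q : C → X → ℝ)
    (hP0 : ∀ c x, 0 ≤ P c x) (hP1 : ∀ c, ∑ x, P c x = 1)
    (hQ0 : ∀ c x, 0 ≤ Q c x) (hQ1 : ∀ c, ∑ x, Q c x = 1) :
    CG pc qc P Q ≥ -Real.log 4 + 2 * jsDiv pc qc := by
  set p : C → X → ℝ := fun c x => pc c * P c x
  set q : C → X → ℝ := fun c x => qc c * Q c x
  have hp : ∀ c x, 0 ≤ p c x := fun c x => mul_nonneg (hpc0 c) (hP0 c x)
  have hq : ∀ c x, 0 ≤ q c x := fun c x => mul_nonneg (hqc0 c) (hQ0 c x)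
  have hpc : ∀ c, ∑ x, p c x = pc c := fun c => by rw [← mul_sum, hP1, mul_one]
  have hqc : ∀ c, ∑ x, q c x = qc c := fun c => by rw [← mul_sum, hQ1, mul_one]
  have hmass : ∑ z : C × X, (uncurry p z + uncurry q z) = 2 := by
    rw [Fintype.sum_prod_type]
    simp only [uncurry_apply_pair, sum_add_distrib, hpc, hqc, hpc1, hqc1]
    norm_num
  have hCG : CG pc qc P Q = 2 * jsDiv (uncurry p) (uncurry q) - 2 * log 2 :=
    (CG_eq_sum_ganTerm pc qc P Q).trans
      (hmass ▸ sum_ganTerm_eq_jsDiv (fun z : C × X => hp z.1 z.2) (fun z => hq z.1 z.2))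
  have hJS : jsDiv pc qc ≤ jsDiv (uncurry p) (uncurry q) := by
    simpa only [hpc, hqc] using jsDiv_sum_le_jsDiv_uncurry hp hq
  have hlog4 : log 4 = 2 * log 2 := by
    rw [show (4 : ℝ) = 2 ^ 2 by norm_num, log_pow, Nat.cast_ofNat]
  rw [hCG, hlog4]
  linarith
end

section
/- Let C and X be finite types, let p_c and q_c be pmfs on C, and for each c : C let P c and Q c be pmfs on X. Then C(G) = − log 4 + 2 * D_JS(p_c ‖ q_c) if and only if P c = Q c for every c : C with p_c c > 0 and q_c c > 0. In particular, if p_c c > 0 and q_c c > 0 for all c, then the global minimum − log 4 + 2 * D_JS(p_c ‖ q_c) of C(G) is achieved if and only if P c = Q c for all c : C. -/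
open Finset

/-!
Write `ℓ(a, b) = a log (a/(a+b)) + b log (b/(a+b))`, so that `C(G) = Σ_c Σ_x ℓ(p_c P, q_c Q)`.
For weights `a, b > 0` and pmfs `u, v` with mixture `m = (a u + b v)/(a + b)`, the chain rule
for relative entropy gives `Σ_x ℓ(a u x, b v x) = ℓ(a, b) + a D_KL(u ‖ m) + b D_KL(v ‖ m)`,
and by Gibbs' inequality the defect vanishes iff `u = m = v`; if `a` or `b` is `0` both sides
vanish. For `a = b = 1` the same identity reads `Σ_c ℓ(p_c, q_c) = − log 4 + 2 D_JS(p_c ‖ q_c)`.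
-/

open Real

noncomputable def klTerm (u w : ℝ) : ℝ :=
  if u = 0 then 0 else u * log (u / w)

noncomputable def ganLoss (a b : ℝ) : ℝ :=
  klTerm a (a + b) + klTerm b (a + b)

lemma klDiv_eq_sum_klTerm {α : Type*} [Fintype α] (u w : α → ℝ) :
    klDiv u w = ∑ x, klTerm (u x) (w x) := rfl

lemma klTerm_zero_left (w : ℝ) : klTerm 0 w = 0 := if_pos rfl

lemma klTerm_self (u : ℝ) : klTerm u u = 0 := by
  by_cases hu : u = 0 <;> simp [klTerm, hu]

lemma klTerm_of_ne_zero {u : ℝ} (hu : u ≠ 0) (w : ℝ) : klTerm u w = u * log (u / w) :=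
  if_neg hu

lemma klTerm_sub_sub_eq_mul_klFun {u w : ℝ} (hu : u ≠ 0) (hw : w ≠ 0) :
    klTerm u w - (u - w) = w * InformationTheory.klFun (u / w) := by
  rw [klTerm_of_ne_zero hu, InformationTheory.klFun_apply]
  field_simp
  ring

lemma sub_le_klTerm {u w : ℝ} (hu : 0 ≤ u) (hw : 0 ≤ w) (hsupp : u ≠ 0 → w ≠ 0) :
    u - w ≤ klTerm u w := by
  rcases eq_or_ne u 0 with rfl | hu0
  · simpa [klTerm_zero_left] using hw
  · have hw0 := hsupp hu0
    have := mul_nonneg hw (InformationTheory.klFun_nonneg (div_nonneg hu hw))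
    linarith [klTerm_sub_sub_eq_mul_klFun hu0 hw0]

lemma klTerm_eq_sub_iff {u w : ℝ} (hu : 0 ≤ u) (hw : 0 ≤ w) (hsupp : u ≠ 0 → w ≠ 0) :
    klTerm u w = u - w ↔ u = w := by
  rcases eq_or_ne u 0 with rfl | hu0
  · simp [klTerm_zero_left, eq_comm]
  · have hw0 := hsupp hu0
    rw [← sub_eq_zero, klTerm_sub_sub_eq_mul_klFun hu0 hw0, mul_eq_zero,
      or_iff_right hw0, InformationTheory.klFun_eq_zero_iff (div_nonneg hu hw), div_eq_one_iff_eq hw0]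

section Gibbs

variable {α : Type*} [Fintype α] {u w : α → ℝ}

lemma klDiv_eq_sum_klTerm_sub_sub (hsum : ∑ x, u x = ∑ x, w x) :
    klDiv u w = ∑ x, (klTerm (u x) (w x) - (u x - w x)) := by
  rw [sum_sub_distrib, sum_sub_distrib, hsum, sub_self, sub_zero]
  rfl

lemma klDiv_nonneg (hu : ∀ x, 0 ≤ u x) (hw : ∀ x, 0 ≤ w x)
    (hsupp : ∀ x, u x ≠ 0 → w x ≠ 0) (hsum : ∑ x, u x = ∑ x, w x) : 0 ≤ klDiv u w := by
  rw [klDiv_eq_sum_klTerm_sub_sub hsum]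
  exact sum_nonneg fun x _ => sub_nonneg.2 (sub_le_klTerm (hu x) (hw x) (hsupp x))

lemma klDiv_eq_zero_iff (hu : ∀ x, 0 ≤ u x) (hw : ∀ x, 0 ≤ w x)
    (hsupp : ∀ x, u x ≠ 0 → w x ≠ 0) (hsum : ∑ x, u x = ∑ x, w x) : klDiv u w = 0 ↔ u = w := by
  rw [klDiv_eq_sum_klTerm_sub_sub hsum, sum_eq_zero_iff_of_nonneg
    fun x _ => sub_nonneg.2 (sub_le_klTerm (hu x) (hw x) (hsupp x)), funext_iff]
  simp only [mem_univ, true_implies, sub_eq_zero, klTerm_eq_sub_iff (hu _) (hw _) (hsupp _)]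

end Gibbs

lemma klTerm_mul {a s u w : ℝ} (ha : 0 < a) (hs : 0 < s) (hsupp : u ≠ 0 → w ≠ 0) :
    klTerm (a * u) w = a * klTerm u (w / s) + a * u * log (a / s) := by
  rcases eq_or_ne u 0 with rfl | hu
  · simp [klTerm_zero_left]
  · have hw := hsupp hu
    rw [klTerm_of_ne_zero (mul_ne_zero ha.ne' hu), klTerm_of_ne_zero hu,
      show a * u / w = a / s * (u / (w / s)) by field_simp,
      log_mul (div_ne_zero ha.ne' hs.ne') (div_ne_zero hu (div_ne_zero hw hs.ne'))]
    ring

lemma sum_klTerm_mul {α : Type*} [Fintype α] {a s : ℝ} (ha : 0 < a) (hs : 0 < s)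
    {u w : α → ℝ} (hu1 : ∑ x, u x = 1) (hsupp : ∀ x, u x ≠ 0 → w x ≠ 0) :
    ∑ x, klTerm (a * u x) (w x) = a * klDiv u (fun x => w x / s) + klTerm a s := by
  rw [sum_congr rfl fun x _ => klTerm_mul ha hs (hsupp x), sum_add_distrib, ← mul_sum,
    ← sum_mul, ← mul_sum, hu1, klTerm_of_ne_zero ha.ne', klDiv_eq_sum_klTerm]
  ring

lemma mul_add_mul_ne_zero {a b u v : ℝ} (ha : 0 < a) (hb : 0 ≤ b) (hu : 0 ≤ u) (hv : 0 ≤ v)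
    (hu0 : u ≠ 0) : a * u + b * v ≠ 0 :=
  (add_pos_of_pos_of_nonneg (mul_pos ha (hu.lt_of_ne' hu0)) (mul_nonneg hb hv)).ne'

section Mixture

variable {α : Type*}

noncomputable def mixture (a b : ℝ) (u v : α → ℝ) (x : α) : ℝ :=
  (a * u x + b * v x) / (a + b)

lemma mixture_nonneg {a b : ℝ} (ha : 0 ≤ a) (hb : 0 ≤ b) {u v : α → ℝ}
    (hu : ∀ x, 0 ≤ u x) (hv : ∀ x, 0 ≤ v x) (x : α) : 0 ≤ mixture a b u v x := by
  unfold mixture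
  have := hu x; have := hv x
  positivity

lemma sum_mixture [Fintype α] {a b : ℝ} (hab : a + b ≠ 0) {u v : α → ℝ} (hu1 : ∑ x, u x = 1)
    (hv1 : ∑ x, v x = 1) : ∑ x, mixture a b u v x = 1 := by
  simp only [mixture, ← sum_div, sum_add_distrib, ← mul_sum, hu1, hv1, mul_one, div_self hab]

lemma mixture_self {a b : ℝ} (hab : a + b ≠ 0) (u : α → ℝ) : mixture a b u u = u := by
  funext x
  rw [mixture, ← add_mul, mul_div_cancel_left₀ _ hab]

lemma mixture_comm (a b : ℝ) (u v : α → ℝ) : mixture a b u v = mixture b a v u := by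
  funext x
  rw [mixture, mixture, add_comm (a * u x), add_comm a]

lemma mixture_ne_zero {a b : ℝ} (ha : 0 < a) (hb : 0 ≤ b) {u v : α → ℝ}
    (hu : ∀ x, 0 ≤ u x) (hv : ∀ x, 0 ≤ v x) (x : α) (hux : u x ≠ 0) :
    mixture a b u v x ≠ 0 :=
  div_ne_zero (mul_add_mul_ne_zero ha hb (hu x) (hv x) hux) (add_pos_of_pos_of_nonneg ha hb).ne'

lemma mixture_one_one (u v : α → ℝ) : mixture 1 1 u v = fun x => (u x + v x) / 2 := by
  funext x
  norm_num [mixture]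

end Mixture

section MixtureGibbs

variable {α : Type*} [Fintype α] {a b : ℝ} {u v : α → ℝ}

lemma klDiv_mixture_nonneg (ha : 0 < a) (hb : 0 ≤ b) (hu0 : ∀ x, 0 ≤ u x)
    (hu1 : ∑ x, u x = 1) (hv0 : ∀ x, 0 ≤ v x) (hv1 : ∑ x, v x = 1) :
    0 ≤ klDiv u (mixture a b u v) :=
  klDiv_nonneg hu0 (mixture_nonneg ha.le hb hu0 hv0) (mixture_ne_zero ha hb hu0 hv0)
    (by rw [hu1, sum_mixture (add_pos_of_pos_of_nonneg ha hb).ne' hu1 hv1])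

lemma klDiv_mixture_eq_zero_iff (ha : 0 < a) (hb : 0 ≤ b) (hu0 : ∀ x, 0 ≤ u x)
    (hu1 : ∑ x, u x = 1) (hv0 : ∀ x, 0 ≤ v x) (hv1 : ∑ x, v x = 1) :
    klDiv u (mixture a b u v) = 0 ↔ u = mixture a b u v :=
  klDiv_eq_zero_iff hu0 (mixture_nonneg ha.le hb hu0 hv0) (mixture_ne_zero ha hb hu0 hv0)
    (by rw [hu1, sum_mixture (add_pos_of_pos_of_nonneg ha hb).ne' hu1 hv1])

end MixtureGibbs

lemma sum_ganLoss_mul {α : Type*} [Fintype α] {a b : ℝ} (ha : 0 < a) (hb : 0 < b)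
    {u v : α → ℝ} (hu0 : ∀ x, 0 ≤ u x) (hu1 : ∑ x, u x = 1)
    (hv0 : ∀ x, 0 ≤ v x) (hv1 : ∑ x, v x = 1) :
    ∑ x, ganLoss (a * u x) (b * v x) =
      ganLoss a b + a * klDiv u (mixture a b u v) + b * klDiv v (mixture a b u v) := by
  simp only [ganLoss, sum_add_distrib]
  rw [sum_klTerm_mul ha (add_pos ha hb) hu1 fun x =>
      mul_add_mul_ne_zero ha hb.le (hu0 x) (hv0 x),
    sum_klTerm_mul hb (add_pos ha hb) hv1 fun x hx => by
      rw [add_comm]; exact mul_add_mul_ne_zero hb ha.le (hv0 x) (hu0 x) hx]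
  unfold mixture
  ring

lemma ganLoss_of_mul_eq_zero {a b : ℝ} (h : a * b = 0) : ganLoss a b = 0 := by
  rcases mul_eq_zero.1 h with rfl | rfl <;> simp [ganLoss, klTerm_zero_left, klTerm_self]

lemma ganLoss_one_one : ganLoss 1 1 = -log 4 := by
  rw [ganLoss, klTerm_of_ne_zero one_ne_zero, show (4 : ℝ) = 2 ^ 2 by norm_num, log_pow,
    one_add_one_eq_two, one_div, log_inv]
  ring

section PerCategory

variable {α : Type*} [Fintype α] {a b : ℝ} {u v : α → ℝ}

lemma sum_ganLoss_mul_of_mul_eq_zero (h : a * b = 0) :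
    ∑ x, ganLoss (a * u x) (b * v x) = ganLoss a b := by
  rw [ganLoss_of_mul_eq_zero h]
  exact sum_eq_zero fun x _ => ganLoss_of_mul_eq_zero (by linear_combination u x * v x * h)

lemma ganLoss_le_sum_ganLoss_mul (ha : 0 ≤ a) (hb : 0 ≤ b) (hu0 : ∀ x, 0 ≤ u x)
    (hu1 : ∑ x, u x = 1) (hv0 : ∀ x, 0 ≤ v x) (hv1 : ∑ x, v x = 1) :
    ganLoss a b ≤ ∑ x, ganLoss (a * u x) (b * v x) := by
  rcases eq_or_ne (a * b) 0 with hab | hab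
  · exact (sum_ganLoss_mul_of_mul_eq_zero hab).ge
  have ha' := ha.lt_of_ne' (left_ne_zero_of_mul hab)
  have hb' := hb.lt_of_ne' (right_ne_zero_of_mul hab)
  have hKu := klDiv_mixture_nonneg ha' hb hu0 hu1 hv0 hv1
  have hKv := klDiv_mixture_nonneg hb' ha hv0 hv1 hu0 hu1
  rw [← mixture_comm] at hKv
  rw [sum_ganLoss_mul ha' hb' hu0 hu1 hv0 hv1, add_assoc]
  exact le_add_of_nonneg_right (add_nonneg (mul_nonneg ha hKu) (mul_nonneg hb hKv))

lemma ganLoss_eq_sum_ganLoss_mul_iff (ha : 0 ≤ a) (hb : 0 ≤ b) (hu0 : ∀ x, 0 ≤ u x)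
    (hu1 : ∑ x, u x = 1) (hv0 : ∀ x, 0 ≤ v x) (hv1 : ∑ x, v x = 1) :
    ganLoss a b = ∑ x, ganLoss (a * u x) (b * v x) ↔ (0 < a → 0 < b → u = v) := by
  rcases eq_or_ne (a * b) 0 with hab | hab
  · exact iff_of_true (sum_ganLoss_mul_of_mul_eq_zero hab).symm
      fun ha' hb' => absurd hab (mul_pos ha' hb').ne'
  have ha' := ha.lt_of_ne' (left_ne_zero_of_mul hab)
  have hb' := hb.lt_of_ne' (right_ne_zero_of_mul hab)
  have hKu := klDiv_mixture_nonneg ha' hb hu0 hu1 hv0 hv1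
  have hKv := klDiv_mixture_nonneg hb' ha hv0 hv1 hu0 hu1
  rw [← mixture_comm] at hKv
  rw [sum_ganLoss_mul ha' hb' hu0 hu1 hv0 hv1, add_assoc, left_eq_add,
    add_eq_zero_iff_of_nonneg (mul_nonneg ha hKu) (mul_nonneg hb hKv),
    mul_eq_zero, mul_eq_zero, or_iff_right ha'.ne', or_iff_right hb'.ne',
    klDiv_mixture_eq_zero_iff ha' hb hu0 hu1 hv0 hv1, mixture_comm a b u v,
    klDiv_mixture_eq_zero_iff hb' ha hv0 hv1 hu0 hu1, ← mixture_comm]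
  simp only [ha', hb', true_implies]
  constructor
  · rintro ⟨hu, hv⟩
    exact hu.trans hv.symm
  · rintro rfl
    rw [mixture_self (add_pos ha' hb').ne']
    exact ⟨rfl, rfl⟩

end PerCategory

lemma neg_log_four_add_two_mul_jsDiv {α : Type*} [Fintype α] {p q : α → ℝ}
    (hp0 : ∀ x, 0 ≤ p x) (hp1 : ∑ x, p x = 1) (hq0 : ∀ x, 0 ≤ q x) (hq1 : ∑ x, q x = 1) :
    -log 4 + 2 * jsDiv p q = ∑ x, ganLoss (p x) (q x) := by
  have h := sum_ganLoss_mul one_pos one_pos hp0 hp1 hq0 hq1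
  simp only [one_mul, mixture_one_one, ganLoss_one_one] at h
  rw [h, jsDiv]
  ring

lemma ite_pos_ganLoss {a b : ℝ} (ha : 0 ≤ a) (hb : 0 ≤ b) :
    (if 0 < a + b then ganLoss a b else 0) = ganLoss a b := by
  split_ifs with h
  · rfl
  · have ha0 : a = 0 := by linarith [not_lt.1 h]
    exact (ganLoss_of_mul_eq_zero (by rw [ha0, zero_mul])).symm

lemma CG_eq_sum_ganLoss {C X : Type*} [Fintype C] [Fintype X] {pc qc : C → ℝ} {P Q : C → X → ℝ}
    (hpc0 : ∀ c, 0 ≤ pc c) (hqc0 : ∀ c, 0 ≤ qc c) (hP0 : ∀ c x, 0 ≤ P c x)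
    (hQ0 : ∀ c x, 0 ≤ Q c x) :
    CG pc qc P Q = ∑ c, ∑ x, ganLoss (pc c * P c x) (qc c * Q c x) :=
  sum_congr rfl fun c _ => sum_congr rfl fun x _ =>
    ite_pos_ganLoss (mul_nonneg (hpc0 c) (hP0 c x)) (mul_nonneg (hqc0 c) (hQ0 c x))

/-- Theorem 2 of the paper: the global minimum `− log 4 + 2 D_JS(p_c ‖ q_c)` of `C(G)`
is achieved if and only if `P c = Q c` for every category `c` carrying positive weight
under both `p_c` and `q_c`; in particular, if all categories have positive weight,
the minimum is achieved iff `P c = Q c` for all `c`. -/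
theorem CG_global_min_iff
    {C X : Type*} [Fintype C] [Fintype X]
    (pc qc : C → ℝ)
    (hpc0 : ∀ c, 0 ≤ pc c) (hpc1 : ∑ c, pc c = 1)
    (hqc0 : ∀ c, 0 ≤ qc c) (hqc1 : ∑ c, qc c = 1)
    (P Q : C → X → ℝ)
    (hP0 : ∀ c x, 0 ≤ P c x) (hP1 : ∀ c, ∑ x, P c x = 1)
    (hQ0 : ∀ c x, 0 ≤ Q c x) (hQ1 : ∀ c, ∑ x, Q c x = 1) :
    (CG pc qc P Q = -Real.log 4 + 2 * jsDiv pc qc ↔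
      ∀ c, 0 < pc c → 0 < qc c → P c = Q c) ∧
    ((∀ c, 0 < pc c ∧ 0 < qc c) →
      (CG pc qc P Q = -Real.log 4 + 2 * jsDiv pc qc ↔ ∀ c, P c = Q c)) := by
  have main : CG pc qc P Q = -log 4 + 2 * jsDiv pc qc ↔
      ∀ c, 0 < pc c → 0 < qc c → P c = Q c := by
    rw [CG_eq_sum_ganLoss hpc0 hqc0 hP0 hQ0, neg_log_four_add_two_mul_jsDiv hpc0 hpc1 hqc0 hqc1,
      eq_comm, sum_eq_sum_iff_of_le fun c _ =>
        ganLoss_le_sum_ganLoss_mul (hpc0 c) (hqc0 c) (hP0 c) (hP1 c) (hQ0 c) (hQ1 c)]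
    simp only [mem_univ, true_implies]
    exact forall_congr' fun c =>
      ganLoss_eq_sum_ganLoss_mul_iff (hpc0 c) (hqc0 c) (hP0 c) (hP1 c) (hQ0 c) (hQ1 c)
  refine ⟨main, fun hpos => main.trans ?_⟩
  exact ⟨fun h c => h c (hpos c).1 (hpos c).2, fun h c _ _ => h c⟩
end
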